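/- Let ℓ = k^s be an odd prime power (k an odd prime, s a positive integer), let p be a prime and let q be a positive integer such that p > q, p ≠ k and k ∤ (p − 1). If n is a positive integer with p − q ≤ n ≤ 2p − q − 1, then the p-adic valuation of the product (1^ℓ + q^ℓ)(2^ℓ + q^ℓ) ⋯ (n^ℓ + q^ℓ) equals 1. -/

import Mathlib

/-!
Since `ℓ` is prime to `p - 1 = #(ZMod p)ˣ`, the map `x ↦ x ^ ℓ` is injective on `ZMod p`; as `ℓ` is
odd, `a ^ ℓ + q ^ ℓ ≡ 0 = a ^ ℓ - (-q) ^ ℓ` then forces `a ≡ -q (mod p)`. In the range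
`1 ≤ a ≤ 2p - q - 1` this leaves only the factor `a = p - q`, whose valuation is
`ν_p(p) + ν_p(ℓ) = 1` by lifting the exponent.
-/

open Finset

theorem pow_left_injective_of_coprime_card_sub_one {G₀ : Type*} [GroupWithZero G₀] {ℓ : ℕ}
    (hℓ : ℓ ≠ 0) (hcop : (Nat.card G₀ - 1).Coprime ℓ) :
    Function.Injective fun x : G₀ => x ^ ℓ := by
  have hunits : (Nat.card G₀ˣ).Coprime ℓ := by rwa [Nat.card_units]
  intro x y hxy
  simp only at hxy
  rcases eq_or_ne x 0 with rfl | hx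
  · rw [zero_pow hℓ, eq_comm, pow_eq_zero_iff hℓ] at hxy
    exact hxy.symm
  have hy : y ≠ 0 := by
    rintro rfl
    rw [zero_pow hℓ, pow_eq_zero_iff hℓ] at hxy
    exact hx hxy
  have hunit : Units.mk0 x hx = Units.mk0 y hy :=
    hunits.pow_left_bijective.injective (Units.ext (by simpa using hxy))
  simpa using congrArg Units.val hunit

theorem Nat.Prime.dvd_add_of_dvd_pow_add_pow {p ℓ a b : ℕ} (hp : p.Prime) (hℓ : Odd ℓ)
    (hcop : (p - 1).Coprime ℓ) (h : p ∣ a ^ ℓ + b ^ ℓ) : p ∣ a + b := by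
  have : Fact p.Prime := ⟨hp⟩
  have hpow : (a : ZMod p) ^ ℓ = (-(b : ZMod p)) ^ ℓ := by
    have h0 := (ZMod.natCast_eq_zero_iff _ p).2 h
    push_cast at h0
    rw [hℓ.neg_pow]
    linear_combination h0
  have hcard : (Nat.card (ZMod p) - 1).Coprime ℓ := by rwa [Nat.card_zmod]
  have hab : (a : ZMod p) = -b := pow_left_injective_of_coprime_card_sub_one hℓ.pos.ne' hcard hpow
  rw [← ZMod.natCast_eq_zero_iff]
  push_cast
  rw [hab, neg_add_cancel]

theorem padicValNat_sub_pow_add_pow {p q ℓ : ℕ} (hp : p.Prime) (hq : 0 < q) (hqp : q < p)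
    (hℓ : Odd ℓ) (hpℓ : ¬ p ∣ ℓ) : padicValNat p ((p - q) ^ ℓ + q ^ ℓ) = 1 := by
  have : Fact p.Prime := ⟨hp⟩
  rcases hp.eq_two_or_odd' with rfl | hodd
  · obtain rfl : q = 1 := by omega
    simp
  have hsum : p - q + q = p := Nat.sub_add_cancel hqp.le
  have hndvd : ¬ p ∣ p - q := Nat.not_dvd_of_pos_of_lt (by omega) (by omega)
  rw [padicValNat.pow_add_pow hodd (by rw [hsum]) hndvd hℓ, hsum, padicValNat.self hp.one_lt,
    padicValNat.eq_zero_of_not_dvd hpℓ]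

theorem padicValNat_prod_of_not_dvd {ι : Type*} [DecidableEq ι] {p : ℕ} [Fact p.Prime]
    {s : Finset ι} {f : ι → ℕ} {i : ι} (hi : i ∈ s) (hf : ∀ j ∈ s, f j ≠ 0)
    (hdvd : ∀ j ∈ s, j ≠ i → ¬ p ∣ f j) :
    padicValNat p (∏ j ∈ s, f j) = padicValNat p (f i) := by
  have hrest : ¬ p ∣ ∏ j ∈ s.erase i, f j := by
    intro h
    obtain ⟨j, hj, hpj⟩ := (Fact.out : p.Prime).prime.dvd_finsetProd_iff _ |>.1 h
    exact hdvd j (mem_of_mem_erase hj) (ne_of_mem_erase hj) hpj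
  rw [← mul_prod_erase _ _ hi, padicValNat.mul (hf i hi)
    (prod_ne_zero_iff.2 fun j hj => hf j (mem_of_mem_erase hj)),
    padicValNat.eq_zero_of_not_dvd hrest, add_zero]

theorem stmt5_general (k s ℓ p q n : ℕ) (hk : k.Prime) (hkodd : Odd k)
    (hℓ : ℓ = k ^ s) (hp : p.Prime) (hq : 0 < q) (hpq : q < p) (hpk : p ≠ k)
    (hndvd : ¬ k ∣ (p - 1)) (h1 : p - q ≤ n) (h2 : n ≤ 2 * p - q - 1) :
    padicValNat p (∏ a ∈ Finset.Icc 1 n, (a ^ ℓ + q ^ ℓ)) = 1 := by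
  have : Fact p.Prime := ⟨hp⟩
  have hℓodd : Odd ℓ := hℓ ▸ hkodd.pow
  have hcop : (p - 1).Coprime ℓ := hℓ ▸ ((hk.coprime_iff_not_dvd.2 hndvd).pow_left s).symm
  have hpℓ : ¬ p ∣ ℓ := fun h =>
    hpk ((Nat.prime_dvd_prime_iff_eq hp hk).1 (hp.dvd_of_dvd_pow (hℓ ▸ h)))
  have honly : ∀ a ∈ Icc 1 n, a ≠ p - q → ¬ p ∣ a ^ ℓ + q ^ ℓ := by
    intro a ha hne hdvd
    have hsum : a + q = p := Nat.eq_of_dvd_of_lt_two_mul (by omega)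
      (hp.dvd_add_of_dvd_pow_add_pow hℓodd hcop hdvd) (by simp only [mem_Icc] at ha; omega)
    omega
  rw [padicValNat_prod_of_not_dvd (mem_Icc.2 ⟨by omega, h1⟩) (fun a _ => by positivity) honly]
  exact padicValNat_sub_pow_add_pow hp hq hpq hℓodd hpℓ

theorem stmt5 (k s ℓ p q n : ℕ) (hk : k.Prime) (hkodd : Odd k) (hs : 0 < s)
    (hℓ : ℓ = k ^ s) (hp : p.Prime) (hq : 0 < q) (hpq : q < p) (hpk : p ≠ k)
    (hndvd : ¬ k ∣ (p - 1)) (hn : 0 < n) (h1 : p - q ≤ n) (h2 : n ≤ 2 * p - q - 1) :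
    padicValNat p (∏ a ∈ Finset.Icc 1 n, (a ^ ℓ + q ^ ℓ)) = 1 :=
  stmt5_general k s ℓ p q n hk hkodd hℓ hp hq hpq hpk hndvd h1 h2
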